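/- The theory T_2n is stably finite: for every quantifier-free Σ_P-formula φ and every model A of T_2n with a valuation satisfying φ, there is a model B of T_2n with a valuation satisfying φ such that the domain of B is finite and |B| ≤ |A|. -/

import Mathlib

open FirstOrder FirstOrder.Language

/-- The signature Σ_P with a single unary predicate symbol `P`. -/
def LP : FirstOrder.Language :=
  ⟨fun _ => Empty, fun n => match n with | 1 => Unit | _ => Empty⟩

/-- The unary predicate symbol of `LP`. -/
def PSymb : LP.Relations 1 := Unit.unit

/-- The interpretation of the predicate symbol `P` in an `LP`-structure. -/
def PPred (M : Type) (inst : LP.Structure M) (a : M) : Prop :=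
  inst.RelMap PSymb ![a]

/-- Realization of a formula, with the structure instance given explicitly. -/
def RealizeP {α : Type} (M : Type) (inst : LP.Structure M) (φ : LP.Formula α) (v : α → M) : Prop :=
  letI := inst
  φ.Realize v

/-- `M` is a model of T_2n, axiomatized by `{ψ_n^P → ψ_{≥2n} : n ≥ 1}`: if there are at
least `n` distinct elements satisfying `P`, then there are at least `2n` elements. -/
def ModelT2n (M : Type) (inst : LP.Structure M) : Prop :=
  ∀ n : ℕ, 1 ≤ n →
    (∃ x : Fin n → M, Function.Injective x ∧ ∀ i, PPred M inst (x i)) →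
    ∃ y : Fin (2 * n) → M, Function.Injective y

/-!
A quantifier-free Σ_P-formula only sees equalities between, and the truth of `P` at, the values
of its finitely many free variables; so it survives passing to any set containing these values,
with `P` cut down to them. A structure is a model of T_2n exactly when it has at least twice as
many elements as `P`-elements. So if `k` of the values satisfy `P`, the given model has `2k`
elements, and adding them to the values gives a finite model.
-/

open Cardinal

theorem FirstOrder.Language.BoundedFormula.realize_congr_freeVar {L : Language} {M : Type*}
    [L.Structure M] {α : Type*} [DecidableEq α] {n : ℕ} {φ : L.BoundedFormula α n}
    {v u : α → M} {xs : Fin n → M} (h : ∀ a ∈ φ.freeVarFinset, v a = u a) :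
    φ.Realize v xs ↔ φ.Realize u xs := by
  rw [← realize_restrictFreeVar (f := id) (v := fun a => v a) v (fun _ => rfl),
    ← realize_restrictFreeVar (f := id) (v := fun a => v a) u (fun a => h a a.2)]

theorem Set.exists_finite_range_eqOn {α β : Type*} (v : α → β) {s : Set α} (hs : s.Finite) :
    ∃ u : α → β, (Set.range u).Finite ∧ Set.EqOn u v s := by
  classical
  rcases isEmpty_or_nonempty α with _ | ⟨⟨a₀⟩⟩
  · exact ⟨v, Set.finite_range v, Set.eqOn_refl v s⟩
  · refine ⟨s.piecewise v fun _ => v a₀, ?_, Set.piecewise_eqOn s _ _⟩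
    refine ((hs.image v).insert (v a₀)).subset ?_
    rintro _ ⟨a, rfl⟩
    by_cases ha : a ∈ s
    · simpa [ha] using Set.mem_insert_of_mem _ (Set.mem_image_of_mem v ha)
    · simp [ha]

namespace LP

theorem term_eq_var {γ : Type*} (t : LP.Term γ) : ∃ c, t = Term.var c := by
  cases t with
  | var c => exact ⟨c, rfl⟩
  | func f _ => exact f.elim

theorem realize_comp_iff_of_injective {N M : Type*} [LP.Structure N] [LP.Structure M]
    {α : Type*} {n : ℕ} {φ : LP.BoundedFormula α n} (hφ : φ.IsQF) {f : N → M}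
    (hf : Function.Injective f) (w : α → N) (xs : Fin n → N)
    (hP : ∀ s, Structure.RelMap PSymb ![Sum.elim w xs s] ↔
      Structure.RelMap PSymb ![f (Sum.elim w xs s)]) :
    φ.Realize w xs ↔ φ.Realize (f ∘ w) (f ∘ xs) := by
  induction hφ with
  | falsum => rfl
  | of_isAtomic hA =>
    cases hA with
    | equal t₁ t₂ =>
      obtain ⟨c₁, rfl⟩ := term_eq_var t₁
      obtain ⟨c₂, rfl⟩ := term_eq_var t₂
      simp only [BoundedFormula.realize_bdEqual, Term.realize_var, ← Sum.comp_elim,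
        Function.comp_apply, hf.eq_iff]
    | @rel l R ts =>
      match l, R with
      | 1, () =>
        obtain ⟨c, hc⟩ := term_eq_var (ts 0)
        have hts : ts = ![Term.var c] := by
          funext i
          rw [Subsingleton.elim i 0, hc]
          rfl
        subst hts
        change (PSymb.boundedFormula₁ (Term.var c)).Realize w xs ↔
          (PSymb.boundedFormula₁ (Term.var c)).Realize (f ∘ w) (f ∘ xs)
        rw [BoundedFormula.realize_rel₁, BoundedFormula.realize_rel₁, Term.realize_var,
          Term.realize_var, ← Sum.comp_elim]
        exact hP c
  | imp _ _ ih₁ ih₂ => exact imp_congr ih₁ ih₂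


abbrev predStructure {M : Type*} (p : M → Prop) : LP.Structure M where
  funMap := fun f => Empty.elim f
  RelMap := fun {n} _ xs => match n, xs with
    | 1, xs => p (xs 0)

theorem modelT2n_iff (M : Type) (inst : LP.Structure M) :
    ModelT2n M inst ↔ 2 * #{a // PPred M inst a} ≤ #M := by
  constructor
  · intro hM
    rcases lt_or_ge #{a // PPred M inst a} ℵ₀ with hfin | hinf
    · obtain ⟨k, hk⟩ := lt_aleph0.1 hfin
      rcases Nat.eq_zero_or_pos k with rfl | hk_pos
      · simp [hk]
      obtain ⟨e⟩ := Cardinal.eq.1 (hk.trans (mk_fin k).symm)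
      obtain ⟨y, hy⟩ := hM k hk_pos
        ⟨fun i => e.symm i, Subtype.val_injective.comp e.symm.injective, fun i => (e.symm i).2⟩
      simpa [hk] using mk_le_of_injective hy
    · rw [mul_eq_right hinf (ofNat_le_aleph0.trans hinf) two_ne_zero]
      exact mk_subtype_le _
  · rintro h n - ⟨x, hx, hxP⟩
    have hn : (n : Cardinal) ≤ #{a // PPred M inst a} := by
      simpa using mk_le_of_injective (f := fun i => (⟨x i, hxP i⟩ : {a // PPred M inst a}))
        fun i j hij => hx (congrArg Subtype.val hij)
    obtain ⟨y⟩ := (le_def _ _).1 (by simpa using (mul_le_mul_right hn 2).trans h :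
      #(Fin (2 * n)) ≤ #M)
    exact ⟨y, y.injective⟩

theorem exists_finset_modelT2n {M : Type} {inst : LP.Structure M} (hM : ModelT2n M inst)
    (S : Finset M) :
    ∃ T : Finset M, S ⊆ T ∧ ∃ instT : LP.Structure T, ModelT2n T instT ∧
      ∀ x : T, x.1 ∈ S → (PPred T instT x ↔ PPred M inst x.1) := by
  classical
  set Sp := S.filter (PPred M inst)
  have hSp : 2 * (Sp.card : Cardinal) ≤ #M := by
    refine le_trans ?_ ((modelT2n_iff M inst).1 hM)
    gcongr
    calc (Sp.card : Cardinal) = #(Sp : Set M) := mk_coe_finset.symm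
      _ ≤ #{a | PPred M inst a} := mk_le_mk_of_subset fun a ha => (Finset.mem_filter.1 ha).2
  obtain ⟨t, ht⟩ := exists_finset_eq_card (n := 2 * Sp.card) (by exact_mod_cast hSp)
  refine ⟨S ∪ t, Finset.subset_union_left,
    predStructure fun x => x.1 ∈ S ∧ PPred M inst x.1, (modelT2n_iff _ _).2 ?_,
    fun x hx => and_iff_right hx⟩
  calc 2 * #{x : ↥(S ∪ t) // x.1 ∈ S ∧ PPred M inst x.1} ≤ 2 * Sp.card := by
        gcongr
        let f (x : {x : ↥(S ∪ t) // x.1 ∈ S ∧ PPred M inst x.1}) : Sp :=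
          ⟨x.1.1, Finset.mem_filter.2 x.2⟩
        simpa using mk_le_of_injective (f := f) fun x y hxy =>
          Subtype.ext (Subtype.ext (congrArg Subtype.val hxy :))
    _ = t.card := by exact_mod_cast ht
    _ ≤ #↥(S ∪ t) := by
        rw [mk_fintype, Fintype.card_coe]
        exact_mod_cast Finset.card_le_card Finset.subset_union_right

end LP

/-- The theory T_2n is stably finite: for every quantifier-free formula φ and model of
T_2n with a valuation satisfying φ, there is a finite model of T_2n, of size at most that
of the given model, with a valuation satisfying φ. -/
theorem stmt_9 (α : Type) (φ : LP.Formula α) (hφ : φ.IsQF)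
    (M : Type) (instM : LP.Structure M) (hM : ModelT2n M instM)
    (v : α → M) (hv : RealizeP M instM φ v) :
    ∃ (N : Type) (instN : LP.Structure N), ModelT2n N instN ∧ Finite N ∧
      Cardinal.mk N ≤ Cardinal.mk M ∧ ∃ w : α → N, RealizeP N instN φ w := by
  classical
  obtain ⟨u, hu_fin, hu_eq⟩ := Set.exists_finite_range_eqOn v φ.freeVarFinset.finite_toSet
  have hu_mem (a : α) : u a ∈ hu_fin.toFinset := hu_fin.mem_toFinset.2 ⟨a, rfl⟩
  obtain ⟨T, hST, instT, hT, hPT⟩ := LP.exists_finset_modelT2n hM hu_fin.toFinset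
  let w : α → T := fun a => ⟨u a, hST (hu_mem a)⟩
  refine ⟨T, instT, hT, inferInstance, mk_subtype_le _, w, ?_⟩
  let _ := instM
  have hP : ∀ s, Structure.RelMap PSymb ![Sum.elim w (default : Fin 0 → T) s] ↔
      Structure.RelMap PSymb ![(Sum.elim w (default : Fin 0 → T) s).1] := by
    rintro (a | ⟨_, ⟨⟩⟩)
    exact hPT (w a) (hu_mem a)
  refine (LP.realize_comp_iff_of_injective hφ Subtype.val_injective w default hP).2 ?_
  rw [Subsingleton.elim (Subtype.val ∘ default) default]
  exact (BoundedFormula.realize_congr_freeVar fun a ha => (hu_eq ha).symm).1 hv
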